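/- arXiv:1310.8408 — 2 statements merged into one kernel-verified Lean document; each statement's English description precedes it below -/
import Mathlib

section
/- In Una(L) = L || Det(L): if some divergence trace of L leads to a state s_U of Una(L), then every trace leading to s_U is a divergence trace of L; if no divergence trace leads to s_U, then no trace leading to s_U is a divergence trace of L. (Equivalently: any two traces of Una(L) that lead to the same state are either both divergence traces of L or both non-divergence traces of L.) -/
/-- A labelled transition system with state type `S` and visible-action type `A`.
`none` plays the role of the invisible action τ. -/
structure LTS (S : Type*) (A : Type*) where
  alpha : Set A
  init : S
  tr : S → Option A → S → Prop
  wf : ∀ s a s', tr s (some a) s' → a ∈ alpha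

namespace LTS

variable {S S₁ S₂ S₃ A : Type*}

/-- `Steps L s σ t`: a finite path from `s` to `t` whose visible labels spell `σ`,
with τ-transitions interleaved freely (this is `s ⇒^σ t`). -/
inductive Steps (L : LTS S A) : S → List A → S → Prop
  | refl (s : S) : Steps L s [] s
  | tau {s s' t : S} {σ : List A} : L.tr s none s' → Steps L s' σ t → Steps L s σ t
  | vis {s s' t : S} {a : A} {σ : List A} :
      L.tr s (some a) s' → Steps L s' σ t → Steps L s (a :: σ) t

/-- Traces. -/
def Tr (L : LTS S A) : Set (List A) := { σ | ∃ s, L.Steps L.init σ s }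

/-- A state admits an infinite path consisting solely of τ-transitions. -/
def DivergesFrom (L : LTS S A) (s : S) : Prop :=
  ∃ f : ℕ → S, f 0 = s ∧ ∀ n, L.tr (f n) none (f (n + 1))

/-- Divergence traces. -/
def Div (L : LTS S A) : Set (List A) :=
  { σ | ∃ s, L.Steps L.init σ s ∧ L.DivergesFrom s }

/-- `s` refuses every action in `X ∪ {τ}`. -/
def Refuses (L : LTS S A) (s : S) (X : Set A) : Prop :=
  (∀ s', ¬ L.tr s none s') ∧ ∀ a ∈ X, ∀ s', ¬ L.tr s (some a) s'

/-- Stable failures. -/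
def Sf (L : LTS S A) : Set (List A × Set A) :=
  { p | ∃ s, L.Steps L.init p.1 s ∧ L.Refuses s p.2 }

/-- Traces of stable failures: `Sf^Tr(L) = { σ | (σ, ∅) ∈ Sf(L) }`. -/
def SfTr (L : LTS S A) : Set (List A) := { σ | (σ, (∅ : Set A)) ∈ L.Sf }

/-- The length-`n` prefix of an infinite word. -/
def pref (ξ : ℕ → A) (n : ℕ) : List A := (List.range n).map ξ

/-- Infinite traces: infinite paths from the initial state spelling `ξ`. -/
def Inf (L : LTS S A) : Set (ℕ → A) :=
  { ξ | ∃ g : ℕ → S, g 0 = L.init ∧ ∀ n, L.Steps (g n) [ξ n] (g (n + 1)) }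

/-- Bisimilarity `L₁ ≡ L₂`: equal alphabets and a bisimulation relating the
initial states. -/
def Bisimilar (L₁ : LTS S₁ A) (L₂ : LTS S₂ A) : Prop :=
  L₁.alpha = L₂.alpha ∧
  ∃ R : S₁ → S₂ → Prop, R L₁.init L₂.init ∧
    ∀ s₁ s₂, R s₁ s₂ →
      (∀ a s₁', L₁.tr s₁ a s₁' → ∃ s₂', L₂.tr s₂ a s₂' ∧ R s₁' s₂') ∧
      (∀ a s₂', L₂.tr s₂ a s₂' → ∃ s₁', L₁.tr s₁ a s₁' ∧ R s₁' s₂')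

/-- Parallel composition: synchronization on common visible actions,
interleaving on τ and on actions of only one alphabet. -/
def par (L₁ : LTS S₁ A) (L₂ : LTS S₂ A) : LTS (S₁ × S₂) A where
  alpha := L₁.alpha ∪ L₂.alpha
  init := (L₁.init, L₂.init)
  tr := fun p a q =>
    match a with
    | none => (L₁.tr p.1 none q.1 ∧ q.2 = p.2) ∨ (L₂.tr p.2 none q.2 ∧ q.1 = p.1)
    | some b =>
        (b ∉ L₂.alpha ∧ L₁.tr p.1 (some b) q.1 ∧ q.2 = p.2) ∨
        (b ∉ L₁.alpha ∧ L₂.tr p.2 (some b) q.2 ∧ q.1 = p.1) ∨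
        (b ∈ L₁.alpha ∧ b ∈ L₂.alpha ∧ L₁.tr p.1 (some b) q.1 ∧ L₂.tr p.2 (some b) q.2)
  wf := by
    rintro s b s' (⟨-, h, -⟩ | ⟨-, h, -⟩ | ⟨h₁, h₂, -, -⟩)
    · exact Set.mem_union_left _ (L₁.wf _ _ _ h)
    · exact Set.mem_union_right _ (L₂.wf _ _ _ h)
    · exact Set.mem_union_left _ h₁

theorem mem_alpha_of_steps {L : LTS S A} {s t : S} {σ : List A}
    (h : L.Steps s σ t) : ∀ a ∈ σ, a ∈ L.alpha := by
  induction h with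
  | refl => simp
  | tau _ _ ih => exact ih
  | vis htr _ ih =>
      intro a ha
      rcases List.mem_cons.mp ha with rfl | ha
      · exact L.wf _ _ _ htr
      · exact ih a ha

/-- `S_σ`: the set of states reachable from the initial state via `σ`. -/
def Sset (L : LTS S A) (σ : List A) : Set S := { s | L.Steps L.init σ s }

/-- Determinization `Det(L)`, with states `S_σ`, transitions
`(S_σ, a, S_{σa})` for `σa ∈ Tr(L)`, and initial state `S_ε`. -/
def Det (L : LTS S A) : LTS (Set S) A where
  alpha := L.alpha
  init := L.Sset []
  tr := fun X b Y =>
    ∃ a σ, b = some a ∧ σ ++ [a] ∈ L.Tr ∧ X = L.Sset σ ∧ Y = L.Sset (σ ++ [a])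
  wf := by
    rintro X b Y ⟨a, σ, hb, ⟨t, hsteps⟩, -, -⟩
    obtain rfl : b = a := Option.some.inj hb
    exact mem_alpha_of_steps hsteps b (by simp)

/-- Unambiguation `Una(L) = L || Det(L)`. -/
def Una (L : LTS S A) : LTS (S × Set S) A := L.par L.Det

/-- Minimal divergence traces. -/
def minD (L : LTS S A) : Set (List A) :=
  { σ ∈ L.Div | ∀ i < σ.length, σ.take i ∉ L.Div }

/-- Finite extensions of minimal divergence traces (within `Σ(L)*`). -/
def extT (L : LTS S A) : Set (List A) :=
  { σ | (∀ a ∈ σ, a ∈ L.alpha) ∧ ∃ i ≤ σ.length, σ.take i ∈ L.minD }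

/-- Always-nondivergent traces. -/
def anT (L : LTS S A) : Set (List A) := L.Tr \ L.extT

/-- Infinite extensions of minimal divergence traces (within `Σ(L)^ω`). -/
def extI (L : LTS S A) : Set (ℕ → A) :=
  { ξ | (∀ i, ξ i ∈ L.alpha) ∧ ∃ i, pref ξ i ∈ L.minD }

/-- Always-nondivergent infinite traces. -/
def anI (L : LTS S A) : Set (ℕ → A) := L.Inf \ L.extI

/-- Eventually-always-nondivergent infinite traces. -/
def eanI (L : LTS S A) : Set (ℕ → A) :=
  { ξ ∈ L.Inf | ∃ n, ∀ i ≥ n, pref ξ i ∉ L.Div }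

/-- Always-eventually-nondivergent infinite traces. -/
def aenI (L : LTS S A) : Set (ℕ → A) :=
  { ξ ∈ L.Inf | ∀ n, ∃ i ≥ n, pref ξ i ∉ L.Div }

/-- Nondivergent failures. -/
def nF (L : LTS S A) : Set (List A × Set A) := { p ∈ L.Sf | p.1 ∉ L.Div }

/-- Strongly nondivergent failures. -/
def snF (L : LTS S A) : Set (List A × Set A) :=
  { p ∈ L.nF | ∀ a ∈ p.2, p.1 ++ [a] ∉ L.Div }

/-- Always nondivergent failures. -/
def anF (L : LTS S A) : Set (List A × Set A) := { p ∈ L.Sf | p.1 ∉ L.extT }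

/-- Strongly always nondivergent failures. -/
def sanF (L : LTS S A) : Set (List A × Set A) :=
  { p ∈ L.anF | ∀ a ∈ p.2, p.1 ++ [a] ∉ L.minD }

/-- `X^Tr = { σ | (σ, ∅) ∈ X }`. -/
def XTr (X : Set (List A × Set A)) : Set (List A) := { σ | (σ, (∅ : Set A)) ∈ X }

/-- Internal choice `L₁ ⊓ L₂`: a fresh initial state with a τ-transition to
(a disjoint copy of) each of `L₁` and `L₂`. -/
def ichoice (L₁ : LTS S₁ A) (L₂ : LTS S₂ A) : LTS (Option (S₁ ⊕ S₂)) A where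
  alpha := L₁.alpha ∪ L₂.alpha
  init := none
  tr := fun s a t =>
    (s = none ∧ a = none ∧
      (t = some (Sum.inl L₁.init) ∨ t = some (Sum.inr L₂.init))) ∨
    (∃ s₁ t₁, s = some (Sum.inl s₁) ∧ t = some (Sum.inl t₁) ∧ L₁.tr s₁ a t₁) ∨
    (∃ s₂ t₂, s = some (Sum.inr s₂) ∧ t = some (Sum.inr t₂) ∧ L₂.tr s₂ a t₂)
  wf := by
    rintro s a t (⟨-, h, -⟩ | ⟨s₁, t₁, -, -, h⟩ | ⟨s₂, t₂, -, -, h⟩)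
    · simp at h
    · exact Set.mem_union_left _ (L₁.wf _ _ _ h)
    · exact Set.mem_union_right _ (L₂.wf _ _ _ h)

/-- The livelock LTS `LL`: one state, empty alphabet, a single τ-loop. -/
def LL (A : Type*) : LTS Unit A where
  alpha := ∅
  init := ()
  tr := fun _ a _ => a = none
  wf := by rintro _ _ _ h; simp at h

/-- Reachability from the initial state. -/
def Reachable (L : LTS S A) (s : S) : Prop := ∃ σ, L.Steps L.init σ s

/-- The reachable part of an LTS. -/
def reachPart (L : LTS S A) : LTS {s : S // L.Reachable s} A where
  alpha := L.alpha
  init := ⟨L.init, ⟨[], Steps.refl _⟩⟩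
  tr := fun s a t => L.tr s.1 a t.1
  wf := fun _ a _ h => L.wf _ _ _ h

/-- `σ_a`: extend a trace by a label (`τ` contributes nothing). -/
def extw (σ : List A) (a : Option A) : List A :=
  match a with
  | none => σ
  | some b => σ ++ [b]

open scoped Classical in
/-- `[σ] = pre` (i.e. `true`) iff `σ ∈ anT(L)`. -/
noncomputable def tag (L : LTS S A) (σ : List A) : Bool := decide (σ ∈ L.anT)

/-- `PD(L)`: `Una(L)` augmented with a bit remembering whether the executed
trace is still always-nondivergent (`true` = pre-divergent). -/
noncomputable def PD (L : LTS S A) : LTS ((S × Set S) × Bool) A where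
  alpha := L.alpha
  init := (L.Una.init, L.tag [])
  tr := fun p a q =>
    ∃ σ, L.Una.Steps L.Una.init σ p.1 ∧ p.2 = L.tag σ ∧
      q.2 = L.tag (extw σ a) ∧ L.Una.tr p.1 a q.1
  wf := by
    rintro p a q ⟨σ, -, -, -, h⟩
    have h' := L.Una.wf _ _ _ h
    rcases h' with h' | h' <;> exact h'

lemma Steps.trans' {L : LTS S A} {s m t : S} {σ ρ : List A}
    (h1 : L.Steps s σ m) (h2 : L.Steps m ρ t) : L.Steps s (σ ++ ρ) t := by
  induction h1 with
  | refl => simpa using h2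
  | tau h _ ih => exact Steps.tau h (ih h2)
  | vis h _ ih => exact Steps.vis h (ih h2)

lemma steps_append {L : LTS S A} {s t : S} {χ : List A} (h : L.Steps s χ t) :
    ∀ σ ρ, χ = σ ++ ρ → ∃ m, L.Steps s σ m ∧ L.Steps m ρ t := by
  induction h with
  | refl s =>
      intro σ ρ h
      obtain ⟨rfl, rfl⟩ := List.append_eq_nil_iff.mp h.symm
      exact ⟨s, Steps.refl s, Steps.refl s⟩
  | tau h _ ih =>
      intro σ ρ he
      obtain ⟨m, h1, h2⟩ := ih σ ρ he
      exact ⟨m, Steps.tau h h1, h2⟩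
  | @vis s s' t a χ' h hs ih =>
      intro σ ρ he
      cases σ with
      | nil =>
          simp only [List.nil_append] at he
          exact ⟨s, Steps.refl s, he ▸ Steps.vis h hs⟩
      | cons b σ' =>
          simp only [List.cons_append, List.cons.injEq] at he
          obtain ⟨rfl, he⟩ := he
          obtain ⟨m, h1, h2⟩ := ih σ' ρ he
          exact ⟨m, Steps.vis h h1, h2⟩

lemma Sset_ext {L : LTS S A} {σ ρ : List A} (h : L.Sset σ = L.Sset ρ) (a : A) :
    L.Sset (σ ++ [a]) = L.Sset (ρ ++ [a]) := by
  have key : ∀ σ ρ : List A, L.Sset σ = L.Sset ρ →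
      L.Sset (σ ++ [a]) ⊆ L.Sset (ρ ++ [a]) := by
    intro σ ρ h t ht
    obtain ⟨m, h1, h2⟩ := steps_append ht σ [a] rfl
    have hm : m ∈ L.Sset ρ := h ▸ h1
    exact Steps.trans' hm h2
  exact Set.Subset.antisymm (key σ ρ h) (key ρ σ h.symm)

lemma una_snd {L : LTS S A} {p q : S × Set S} {σ : List A}
    (h : L.Una.Steps p σ q) : ∀ ρ, p.2 = L.Sset ρ → q.2 = L.Sset (ρ ++ σ) := by
  induction h with
  | refl s => intro ρ hρ; simpa using hρ
  | tau htr _ ih =>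
      intro ρ hρ
      rcases htr with ⟨_, h2⟩ | ⟨⟨a, σ', hab, _⟩, _⟩
      · exact ih ρ (h2.trans hρ)
      · simp at hab
  | @vis p p' q a σrest htr _ ih =>
      intro ρ hρ
      have hdet : ∀ (hD : L.Det.tr p.2 (some a) p'.2), q.2 = L.Sset (ρ ++ a :: σrest) := by
        rintro ⟨a', σ', ha', _, hp, hp'⟩
        obtain rfl : a = a' := Option.some.inj ha'
        have hσ' : L.Sset σ' = L.Sset ρ := hp ▸ hρ ▸ rfl
        have hp'2 : p'.2 = L.Sset (ρ ++ [a]) := hp'.trans (Sset_ext hσ' a)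
        have := ih (ρ ++ [a]) hp'2
        simpa [List.append_assoc] using this
      rcases htr with ⟨hna, htr1, _⟩ | ⟨_, hD, _⟩ | ⟨_, _, _, hD⟩
      · exact absurd (L.wf _ _ _ htr1) hna
      · exact hdet hD
      · exact hdet hD

/-- any two traces of `Una(L)` leading to the same state are either
both divergence traces of `L` or both non-divergence traces of `L`. -/
theorem una_div_unambiguous (L : LTS S A) (sU : S × Set S) (σ ρ : List A)
    (hσ : L.Una.Steps L.Una.init σ sU) (hρ : L.Una.Steps L.Una.init ρ sU) :
    σ ∈ L.Div ↔ ρ ∈ L.Div := by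
  have h1 : sU.2 = L.Sset σ := by simpa using una_snd hσ [] rfl
  have h2 : sU.2 = L.Sset ρ := by simpa using una_snd hρ [] rfl
  have hset : L.Sset σ = L.Sset ρ := h1 ▸ h2
  constructor <;> rintro ⟨s, hs, hd⟩
  · exact ⟨s, show s ∈ L.Sset ρ from hset ▸ hs, hd⟩
  · exact ⟨s, show s ∈ L.Sset σ from hset.symm ▸ hs, hd⟩

end LTS
end

section
/- For every LTS L: nF^Tr(L) = snF^Tr(L) = Tr(L) \\ Div(L), and anF^Tr(L) = sanF^Tr(L) = anT(L). -/
namespace LTS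

variable {S S₁ S₂ S₃ A : Type*}

lemma steps_trans_nil {L : LTS S A} {s t u : S} {σ : List A}
    (h1 : L.Steps s σ t) (h2 : L.Steps t [] u) : L.Steps s σ u := by
  induction h1 with
  | refl => exact h2
  | tau h _ ih => exact Steps.tau h (ih h2)
  | vis h _ ih => exact Steps.vis h (ih h2)

lemma exists_stable {L : LTS S A} {s : S} (h : ¬ L.DivergesFrom s) :
    ∃ t, L.Steps s [] t ∧ ∀ u, ¬ L.tr t none u := by
  by_contra hc
  push_neg at hc
  -- hc : ∀ t, Steps s [] t → ∃ u, tr t none u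
  let g : ℕ → {t // L.Steps s [] t} := fun n =>
    Nat.rec ⟨s, Steps.refl s⟩
      (fun _ p => ⟨(hc p.1 p.2).choose,
        steps_trans_nil p.2 (Steps.tau (hc p.1 p.2).choose_spec (Steps.refl _))⟩) n
  exact h ⟨fun n => (g n).1, rfl, fun n => (hc (g n).1 (g n).2).choose_spec⟩

lemma tr_of_nondiv {L : LTS S A} {σ : List A} (hT : σ ∈ L.Tr) (hD : σ ∉ L.Div) :
    (σ, (∅ : Set A)) ∈ L.Sf := by
  obtain ⟨s, hs⟩ := hT
  have hnd : ¬ L.DivergesFrom s := fun hd => hD ⟨s, hs, hd⟩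
  obtain ⟨t, ht, hstable⟩ := exists_stable hnd
  exact ⟨t, steps_trans_nil hs ht, hstable, by simp⟩

lemma extT_of_div {L : LTS S A} {σ : List A} (hT : σ ∈ L.Tr) (hD : σ ∈ L.Div) :
    σ ∈ L.extT := by
  obtain ⟨s, hs⟩ := hT
  refine ⟨mem_alpha_of_steps hs, ?_⟩
  have hex : ∃ i, i ≤ σ.length ∧ σ.take i ∈ L.Div :=
    ⟨σ.length, le_rfl, by simpa using hD⟩
  classical
  obtain ⟨hle, hdiv⟩ := Nat.find_spec hex
  have hmin := fun j (hj : j < Nat.find hex) => Nat.find_min hex hj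
  refine ⟨Nat.find hex, hle, hdiv, ?_⟩
  intro j hj
  rw [List.length_take, lt_min_iff] at hj
  intro hjd
  exact hmin j hj.1 ⟨le_of_lt hj.2,
    by rwa [List.take_take, min_eq_left (le_of_lt hj.1)] at hjd⟩

/-- `nF^Tr(L) = snF^Tr(L) = Tr(L) \ Div(L)` and
`anF^Tr(L) = sanF^Tr(L) = anT(L)`. -/
theorem failure_trace_eqs (L : LTS S A) :
    XTr L.nF = L.Tr \ L.Div ∧ XTr L.snF = L.Tr \ L.Div ∧
    XTr L.anF = L.anT ∧ XTr L.sanF = L.anT := by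
  have hSfTr : ∀ σ : List A, (σ, (∅ : Set A)) ∈ L.Sf → σ ∈ L.Tr := by
    rintro σ ⟨s, hs, -⟩; exact ⟨s, hs⟩
  have h1 : XTr L.nF = L.Tr \ L.Div := by
    ext σ
    constructor
    · rintro ⟨hSf, hD⟩; exact ⟨hSfTr σ hSf, hD⟩
    · rintro ⟨hT, hD⟩; exact ⟨tr_of_nondiv hT hD, hD⟩
  have h3 : XTr L.anF = L.anT := by
    ext σ
    constructor
    · rintro ⟨hSf, hE⟩; exact ⟨hSfTr σ hSf, hE⟩
    · rintro ⟨hT, hE⟩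
      exact ⟨tr_of_nondiv hT (fun hD => hE (extT_of_div hT hD)), hE⟩
  refine ⟨h1, ?_, h3, ?_⟩
  · rw [← h1]; ext σ
    exact ⟨fun h => h.1, fun h => ⟨h, by simp⟩⟩
  · rw [← h3]; ext σ
    exact ⟨fun h => h.1, fun h => ⟨h, by simp⟩⟩

end LTS
end
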